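/- arXiv:1306.4375 — 2 statements merged into one kernel-verified Lean document; each statement's English description precedes it below -/
import Mathlib

section
/- The function f_gar(κ) is strictly increasing and positive on ℝ, with f_gar(κ) → 0 as κ → -∞ and f_gar(κ) → ∞ as κ → ∞. -/
open Real MeasureTheory Filter Set

noncomputable def erfc (x : ℝ) : ℝ := (2 / Real.sqrt π) * ∫ t in Set.Ioi x, Real.exp (-t^2)

noncomputable def fgar (κ : ℝ) : ℝ :=
  κ * Real.exp (-κ^2 / 2) / Real.sqrt (2 * π) + (κ^2 + 1) * erfc (-κ / Real.sqrt 2) / 2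

/-! By the fundamental theorem of calculus,
f_gar'(κ) = 2 e^{-κ²/2}/√(2π) + κ erfc(-κ/√2), and this is positive because of the Mills-type
bound `x erfc x < e^{-x²}/√π`, valid for every real `x` since `∫ₓ^∞ (t - x) e^{-t²} dt > 0`.
The same bound makes both terms of f_gar(κ) of size `O((κ² + 1) e^{-κ²/2})` as `κ → -∞`,
while `erfc ≥ 1` on `(-∞, 0]` gives `f_gar(κ) ≥ (κ² + 1)/2` for `κ ≥ 0`. Positivity follows from
monotonicity and the limit `0` at `-∞`. -/

theorem hasDerivAt_integral_Ioi {f : ℝ → ℝ} (hf : Integrable f) (hc : Continuous f) (x : ℝ) :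
    HasDerivAt (fun y => ∫ t in Ioi y, f t) (-f x) x := by
  have h : (fun y => ∫ t in Ioi y, f t) = fun y => (∫ t in Ioi 0, f t) - ∫ t in 0..y, f t := by
    ext y
    rw [← intervalIntegral.integral_Ioi_sub_Ioi' hf.integrableOn hf.integrableOn, sub_sub_cancel]
  rw [h]
  exact (hc.integral_hasStrictDerivAt 0 x).hasDerivAt.const_sub _

theorem setIntegral_Ioi_pos {f : ℝ → ℝ} {a : ℝ} (hf : IntegrableOn f (Ioi a))
    (hpos : ∀ t ∈ Ioi a, 0 < f t) : 0 < ∫ t in Ioi a, f t := by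
  rw [setIntegral_pos_iff_support_of_nonneg_ae
    ((ae_restrict_mem measurableSet_Ioi).mono fun t ht => (hpos t ht).le) hf]
  have : Ioi a ⊆ Function.support f ∩ Ioi a := fun t ht => ⟨(hpos t ht).ne', ht⟩
  exact (measure_mono this).trans_lt' (by simp)

theorem integrable_exp_neg_sq : Integrable fun t : ℝ => exp (-t ^ 2) := by
  simpa using integrable_exp_neg_mul_sq one_pos

theorem integral_Ioi_mul_exp_neg_sq (x : ℝ) :
    ∫ t in Ioi x, t * exp (-t ^ 2) = exp (-x ^ 2) / 2 := by
  have hderiv (t : ℝ) : HasDerivAt (fun t => -exp (-t ^ 2) / 2) (t * exp (-t ^ 2)) t := by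
    have := (((hasDerivAt_pow 2 t).fun_neg.exp).fun_neg.div_const 2)
    exact this.congr_deriv (by push_cast; ring)
  have hlim : Tendsto (fun t : ℝ => -exp (-t ^ 2) / 2) atTop (nhds 0) := by
    have := ((tendsto_exp_atBot.comp (tendsto_neg_atTop_atBot.comp
      (tendsto_pow_atTop two_ne_zero))).neg.div_const 2)
    simpa using this
  rw [integral_Ioi_of_hasDerivAt_of_tendsto' (fun t _ => hderiv t)
    (by simpa using (integrable_mul_exp_neg_mul_sq one_pos).integrableOn) hlim]
  ring

theorem hasDerivAt_erfc (x : ℝ) : HasDerivAt erfc (-(2 / √π * exp (-x ^ 2))) x := by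
  have := (hasDerivAt_integral_Ioi integrable_exp_neg_sq (by fun_prop) x).const_mul (2 / √π)
  exact this.congr_deriv (by ring)

theorem erfc_pos (x : ℝ) : 0 < erfc x :=
  mul_pos (by positivity) (setIntegral_Ioi_pos integrable_exp_neg_sq.integrableOn
    fun t _ => exp_pos _)

theorem erfc_zero : erfc 0 = 1 := by
  have h : ∫ t in Ioi (0 : ℝ), exp (-t ^ 2) = √π / 2 := by
    simpa using integral_gaussian_Ioi 1
  rw [erfc, h]
  field_simp

theorem erfc_strictAnti : StrictAnti erfc :=
  strictAnti_of_deriv_neg fun x => by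
    rw [(hasDerivAt_erfc x).deriv]
    simp only [neg_lt_zero]
    positivity

theorem one_le_erfc {x : ℝ} (hx : x ≤ 0) : 1 ≤ erfc x :=
  erfc_zero ▸ erfc_strictAnti.antitone hx

theorem mul_erfc_lt (x : ℝ) : x * erfc x < exp (-x ^ 2) / √π := by
  have hint₁ : IntegrableOn (fun t : ℝ => t * exp (-t ^ 2)) (Ioi x) := by
    simpa using (integrable_mul_exp_neg_mul_sq one_pos).integrableOn
  have hint₀ : IntegrableOn (fun t : ℝ => x * exp (-t ^ 2)) (Ioi x) :=
    integrable_exp_neg_sq.integrableOn.const_mul x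
  have hpos : 0 < ∫ t in Ioi x, (t * exp (-t ^ 2) - x * exp (-t ^ 2)) :=
    setIntegral_Ioi_pos (hint₁.sub hint₀) fun t ht => by
      rw [← sub_mul]; exact mul_pos (sub_pos.2 ht) (exp_pos _)
  rw [integral_sub hint₁ hint₀, integral_Ioi_mul_exp_neg_sq, integral_const_mul] at hpos
  rw [erfc, lt_div_iff₀ (by positivity)]
  have : √π * (2 / √π) = 2 := by field_simp
  linear_combination 2 * hpos + (x * ∫ t in Ioi x, exp (-t ^ 2)) * this

theorem exp_neg_sq_neg_div_sqrt_two (κ : ℝ) : exp (-(-κ / √2) ^ 2) = exp (-κ ^ 2 / 2) := by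
  rw [div_pow, neg_sq, sq_sqrt zero_le_two, neg_div]

theorem neg_mul_erfc_lt (κ : ℝ) : -κ * erfc (-κ / √2) < 2 * exp (-κ ^ 2 / 2) / √(2 * π) := by
  have h := mul_erfc_lt (-κ / √2)
  rw [exp_neg_sq_neg_div_sqrt_two] at h
  have hsqrt2 : 0 < √2 := by positivity
  calc -κ * erfc (-κ / √2) = √2 * (-κ / √2 * erfc (-κ / √2)) := by field_simp
    _ < √2 * (exp (-κ ^ 2 / 2) / √π) := mul_lt_mul_of_pos_left h hsqrt2
    _ = 2 * exp (-κ ^ 2 / 2) / √(2 * π) := by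
      rw [sqrt_mul zero_le_two]
      field_simp
      rw [sq_sqrt zero_le_two]

theorem hasDerivAt_fgar (κ : ℝ) :
    HasDerivAt fgar (2 * exp (-κ ^ 2 / 2) / √(2 * π) + κ * erfc (-κ / √2)) κ := by
  have hexp : HasDerivAt (fun κ : ℝ => exp (-κ ^ 2 / 2)) (-κ * exp (-κ ^ 2 / 2)) κ := by
    have := ((hasDerivAt_pow 2 κ).fun_neg.div_const 2).exp
    exact this.congr_deriv (by push_cast; ring)
  have herfc : HasDerivAt (fun κ : ℝ => erfc (-κ / √2))
      (-(2 / √π * exp (-κ ^ 2 / 2)) * (-1 / √2)) κ := by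
    have := (hasDerivAt_erfc (-κ / √2)).comp κ ((hasDerivAt_id κ).neg.div_const √2)
    rwa [exp_neg_sq_neg_div_sqrt_two] at this
  have := (((hasDerivAt_id κ).mul hexp).div_const √(2 * π)).add
    ((((hasDerivAt_pow 2 κ).add_const 1).mul herfc).div_const 2)
  refine this.congr_deriv ?_
  rw [sqrt_mul zero_le_two]
  field_simp
  simp only [id, Nat.cast_ofNat]
  ring

theorem fgar_strictMono : StrictMono fgar :=
  strictMono_of_deriv_pos fun κ => by
    rw [(hasDerivAt_fgar κ).deriv]
    linarith [neg_mul_erfc_lt κ]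

theorem tendsto_sq_add_one_mul_exp_neg_sq_div_two :
    Tendsto (fun κ : ℝ => (κ ^ 2 + 1) * exp (-κ ^ 2 / 2)) (cocompact ℝ) (nhds 0) := by
  have h := (tendsto_rpow_abs_mul_exp_neg_mul_sq_cocompact one_half_pos 2).add
    (tendsto_rpow_abs_mul_exp_neg_mul_sq_cocompact one_half_pos 0)
  rw [add_zero] at h
  refine h.congr fun κ => ?_
  rw [rpow_two, sq_abs, rpow_zero]
  ring_nf

theorem abs_fgar_le {κ : ℝ} (hκ : κ ≤ -1) :
    |fgar κ| ≤ (κ ^ 2 + 1) * exp (-κ ^ 2 / 2) / √(2 * π) := by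
  have hE := exp_pos (-κ ^ 2 / 2)
  have hS : 0 < √(2 * π) := by positivity
  have herfc := erfc_pos (-κ / √2)
  have hlt := neg_mul_erfc_lt κ
  rw [abs_le, fgar]
  constructor
  · calc -((κ ^ 2 + 1) * exp (-κ ^ 2 / 2) / √(2 * π))
        _ = -(κ ^ 2 + 1) * exp (-κ ^ 2 / 2) / √(2 * π) := by ring
        _ ≤ κ * exp (-κ ^ 2 / 2) / √(2 * π) := by gcongr; nlinarith
        _ ≤ _ := le_add_of_nonneg_right (by positivity)
  · have : κ * exp (-κ ^ 2 / 2) / √(2 * π) ≤ 0 :=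
      div_nonpos_of_nonpos_of_nonneg (mul_nonpos_of_nonpos_of_nonneg (by linarith) hE.le) hS.le
    have herfc_le : erfc (-κ / √2) ≤ 2 * exp (-κ ^ 2 / 2) / √(2 * π) :=
      (le_mul_of_one_le_left herfc.le (by linarith)).trans hlt.le
    calc _ ≤ (κ ^ 2 + 1) * erfc (-κ / √2) / 2 := by linarith
      _ ≤ (κ ^ 2 + 1) * (2 * exp (-κ ^ 2 / 2) / √(2 * π)) / 2 := by gcongr
      _ = _ := by ring

theorem fgar_tendsto_atBot : Tendsto fgar atBot (nhds 0) := by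
  have hbound := (tendsto_sq_add_one_mul_exp_neg_sq_div_two.div_const √(2 * π)).mono_left
    atBot_le_cocompact
  rw [zero_div] at hbound
  refine squeeze_zero_norm' ?_ hbound
  filter_upwards [eventually_le_atBot (-1)] with κ hκ
  exact abs_fgar_le hκ

theorem sq_add_one_div_two_le_fgar {κ : ℝ} (hκ : 0 ≤ κ) : (κ ^ 2 + 1) / 2 ≤ fgar κ := by
  have herfc : 1 ≤ erfc (-κ / √2) :=
    one_le_erfc (div_nonpos_of_nonpos_of_nonneg (neg_nonpos.2 hκ) (sqrt_nonneg 2))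
  have : 0 ≤ κ * exp (-κ ^ 2 / 2) / √(2 * π) := by positivity
  rw [fgar]
  nlinarith

theorem fgar_tendsto_atTop : Tendsto fgar atTop atTop := by
  refine tendsto_atTop_mono' atTop ?_
    (((tendsto_pow_atTop two_ne_zero).atTop_add (tendsto_const_nhds (x := (1 : ℝ)))).atTop_div_const
      two_pos)
  filter_upwards [eventually_ge_atTop 0] with κ hκ
  exact sq_add_one_div_two_le_fgar hκ

theorem fgar_pos (κ : ℝ) : 0 < fgar κ :=
  (fgar_strictMono.monotone.le_of_tendsto fgar_tendsto_atBot (κ - 1)).trans_lt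
    (fgar_strictMono (sub_one_lt κ))

theorem fgar_strictMono_pos_limits :
    StrictMono fgar ∧ (∀ κ : ℝ, 0 < fgar κ) ∧
    Tendsto fgar atBot (nhds 0) ∧ Tendsto fgar atTop atTop :=
  ⟨fgar_strictMono, fgar_pos, fgar_tendsto_atBot, fgar_tendsto_atTop⟩
end

section
/- If g is a standard normal random variable, then E[((g+κ)₊)²] = f_gar(κ) = κ e^{-κ²/2}/√(2π) + (κ²+1)·erfc(-κ/√2)/2, where (t)₊ = max(t,0). -/
open Real MeasureTheory ProbabilityTheory Filter Set

/-! With `φ x = exp (-x² / 2)`, the expectation is `(2π)^(-1/2) ∫_{-κ}^∞ (x + κ)² φ x dx`.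
Since `φ' = -x φ`, one has `(x + κ)² φ = (κ² + 1) φ + (-(x + 2κ) φ)'`, so the integral is
`κ φ κ` plus `(κ² + 1)` times a Gaussian tail, which the substitution `x = √2 t` turns into `erfc`. -/

open scoped Topology

lemma integrable_pow_mul_exp_neg_mul_sq {b : ℝ} (hb : 0 < b) (n : ℕ) :
    Integrable fun x : ℝ => x ^ n * exp (-b * x ^ 2) := by
  simpa only [rpow_natCast] using
    integrable_rpow_mul_exp_neg_mul_sq hb (neg_one_lt_zero.trans_le n.cast_nonneg)

lemma tendsto_pow_mul_exp_neg_mul_sq_atTop {b : ℝ} (hb : 0 < b) (n : ℕ) :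
    Tendsto (fun x : ℝ => x ^ n * exp (-b * x ^ 2)) atTop (𝓝 0) := by
  refine ((rpow_mul_exp_neg_mul_sq_isLittleO_exp_neg hb n).tendsto_zero_of_tendsto
    (tendsto_exp_atBot.comp (tendsto_id.const_mul_atTop_of_neg (by norm_num)))).congr' ?_
  filter_upwards [eventually_ge_atTop 0] with x hx
  rw [rpow_natCast]

lemma hasDerivAt_exp_neg_sq_div_two (x : ℝ) :
    HasDerivAt (fun x : ℝ => exp (-x ^ 2 / 2)) (-x * exp (-x ^ 2 / 2)) x := by
  have h : HasDerivAt (fun x : ℝ => -x ^ 2 / 2) (-x) x :=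
    ((hasDerivAt_pow 2 x).neg.div_const 2).congr_deriv (by ring)
  simpa [mul_comm] using h.exp

lemma exp_neg_sq_div_two (x : ℝ) : exp (-x ^ 2 / 2) = exp (-(1 / 2) * x ^ 2) := by
  ring_nf

lemma integrable_pow_mul_exp_neg_sq_div_two (n : ℕ) :
    Integrable fun x : ℝ => x ^ n * exp (-x ^ 2 / 2) := by
  simpa only [exp_neg_sq_div_two] using integrable_pow_mul_exp_neg_mul_sq one_half_pos n

lemma tendsto_pow_mul_exp_neg_sq_div_two_atTop (n : ℕ) :
    Tendsto (fun x : ℝ => x ^ n * exp (-x ^ 2 / 2)) atTop (𝓝 0) := by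
  simpa only [exp_neg_sq_div_two] using tendsto_pow_mul_exp_neg_mul_sq_atTop one_half_pos n

lemma integral_Ioi_exp_neg_sq_div_two (a : ℝ) :
    ∫ x in Ioi a, exp (-x ^ 2 / 2) = √(2 * π) / 2 * erfc (a / √2) := by
  have h := integral_comp_mul_left_Ioi (fun t : ℝ => exp (-t ^ 2)) a
    (inv_pos.mpr (sqrt_pos.mpr two_pos))
  have hsq : ∀ x : ℝ, exp (-((√2)⁻¹ * x) ^ 2) = exp (-x ^ 2 / 2) := fun x => by
    rw [mul_pow, inv_pow, sq_sqrt zero_le_two]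
    ring_nf
  simp only [hsq, smul_eq_mul, inv_inv] at h
  rw [h, erfc, sqrt_mul zero_le_two, ← div_eq_inv_mul]
  field_simp

lemma integral_Ioi_sq_mul_exp_neg_sq_div_two (κ : ℝ) :
    ∫ x in Ioi (-κ), (x + κ) ^ 2 * exp (-x ^ 2 / 2)
      = κ * exp (-κ ^ 2 / 2) + (κ ^ 2 + 1) * ∫ x in Ioi (-κ), exp (-x ^ 2 / 2) := by
  have hderiv : ∀ x ∈ Ici (-κ), HasDerivAt (fun x => -(x + 2 * κ) * exp (-x ^ 2 / 2))
      ((x ^ 2 + 2 * κ * x - 1) * exp (-x ^ 2 / 2)) x := fun x _ => by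
    have hlin : HasDerivAt (fun x : ℝ => -(x + 2 * κ)) (-1) x :=
      ((hasDerivAt_id x).add_const _).neg
    exact (hlin.mul (hasDerivAt_exp_neg_sq_div_two x)).congr_deriv (by ring)
  have hint := integrable_pow_mul_exp_neg_sq_div_two
  have hint_exp : Integrable fun x : ℝ => exp (-x ^ 2 / 2) := by simpa using hint 0
  have hint_poly : Integrable fun x => (x ^ 2 + 2 * κ * x - 1) * exp (-x ^ 2 / 2) := by
    convert ((hint 2).add ((hint 1).const_mul (2 * κ))).sub hint_exp using 2 with x
    simp only [Pi.add_apply, Pi.sub_apply]; ring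
  have htend : Tendsto (fun x => -(x + 2 * κ) * exp (-x ^ 2 / 2)) atTop (𝓝 0) := by
    have hlim := ((tendsto_pow_mul_exp_neg_sq_div_two_atTop 1).add
      ((tendsto_pow_mul_exp_neg_sq_div_two_atTop 0).const_mul (2 * κ))).neg
    simp only [mul_zero, add_zero, neg_zero] at hlim
    exact hlim.congr fun x => by ring
  have hsplit : ∀ x : ℝ, (x + κ) ^ 2 * exp (-x ^ 2 / 2)
      = (x ^ 2 + 2 * κ * x - 1) * exp (-x ^ 2 / 2) + (κ ^ 2 + 1) * exp (-x ^ 2 / 2) :=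
    fun x => by ring
  simp only [hsplit]
  rw [integral_add hint_poly.integrableOn (hint_exp.const_mul _).integrableOn,
    integral_Ioi_of_hasDerivAt_of_tendsto' hderiv hint_poly.integrableOn htend,
    integral_const_mul, neg_sq]
  ring

lemma integral_gaussianReal_zero_one (f : ℝ → ℝ) :
    ∫ x, f x ∂gaussianReal 0 1 = (√(2 * π))⁻¹ * ∫ x, exp (-x ^ 2 / 2) * f x := by
  rw [integral_gaussianReal_eq_integral_smul one_ne_zero, ← integral_const_mul]
  simp [gaussianPDFReal, mul_assoc]

lemma integral_exp_neg_sq_div_two_mul_max_sq (κ : ℝ) :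
    ∫ x, exp (-x ^ 2 / 2) * max (x + κ) 0 ^ 2
      = ∫ x in Ioi (-κ), (x + κ) ^ 2 * exp (-x ^ 2 / 2) := by
  rw [← setIntegral_eq_integral_of_forall_compl_eq_zero (s := Ioi (-κ)) fun x hx => by
    rw [max_eq_right (by linarith [not_lt.mp (mem_Ioi.not.mp hx)])]; ring]
  refine setIntegral_congr_fun measurableSet_Ioi fun x hx => ?_
  rw [max_eq_left (by linarith [mem_Ioi.mp hx]), mul_comm]

theorem second_moment_pos_part (κ : ℝ) :
    ∫ g, max (g + κ) 0 ^ 2 ∂(gaussianReal 0 1)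
      = κ * Real.exp (-κ^2 / 2) / Real.sqrt (2 * π)
        + (κ^2 + 1) * erfc (-κ / Real.sqrt 2) / 2 := by
  rw [integral_gaussianReal_zero_one, integral_exp_neg_sq_div_two_mul_max_sq,
    integral_Ioi_sq_mul_exp_neg_sq_div_two, integral_Ioi_exp_neg_sq_div_two]
  have : √(2 * π) ≠ 0 := by positivity
  field_simp
end
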